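/- arXiv:2303.18003 — 2 statements merged into one kernel-verified Lean document; each statement's English description precedes it below -/
import Mathlib

section
/- Let n be a positive integer and let G be a (2K₂, P₄ ∨ Kₙ)-free graph. Suppose L₁ and L₂ are disjoint cliques in G with |L₁| = |L₂| = ω(G[L₁ ∪ L₂]) ≥ 3n + 3, where G[L₁ ∪ L₂] is the subgraph induced by L₁ ∪ L₂. Then every vertex of L₁ has exactly one nonneighbour in L₂, and every vertex of L₂ has exactly one nonneighbour in L₁. -/
open SimpleGraph

/-- The join `G ∨ H` of two graphs: the disjoint union of `G` and `H` together with
all edges between the two parts. -/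
def SimpleGraph.join {α β : Type*} (G : SimpleGraph α) (H : SimpleGraph β) :
    SimpleGraph (α ⊕ β) where
  Adj u v := match u, v with
    | Sum.inl u, Sum.inl v => G.Adj u v
    | Sum.inr u, Sum.inr v => H.Adj u v
    | Sum.inl _, Sum.inr _ => True
    | Sum.inr _, Sum.inl _ => True
  symm := ⟨fun u v => match u, v with
    | Sum.inl u, Sum.inl v => fun h => G.adj_symm h
    | Sum.inr u, Sum.inr v => fun h => H.adj_symm h
    | Sum.inl _, Sum.inr _ => fun _ => trivial
    | Sum.inr _, Sum.inl _ => fun _ => trivial⟩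
  loopless := ⟨fun u => by cases u <;> simp⟩

/-- `G` is `H`-free: `G` has no induced subgraph isomorphic to `H`
(no graph embedding of `H` into `G`). -/
def SimpleGraph.HFree {α β : Type*} (G : SimpleGraph α) (H : SimpleGraph β) : Prop :=
  ¬ Nonempty (H ↪g G)

/-- `2K₂`: the disjoint union of two copies of `K₂`. -/
def twoK2 : SimpleGraph (Fin 2 ⊕ Fin 2) :=
  (⊤ : SimpleGraph (Fin 2)) ⊕g (⊤ : SimpleGraph (Fin 2))

/-- `P₄ ∨ Kₙ`: the join of the path on `4` vertices with the complete graph on `n` vertices. -/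
def P4JoinK (n : ℕ) : SimpleGraph (Fin 4 ⊕ Fin n) :=
  SimpleGraph.join (pathGraph 4) (⊤ : SimpleGraph (Fin n))

lemma nop4kn {n : ℕ} {V : Type} [DecidableEq V] {G : SimpleGraph V}
    (h2 : G.HFree (P4JoinK n))
    {a b c d : V} (hab : G.Adj a b) (hbc : G.Adj b c) (hcd : G.Adj c d)
    (nac : ¬ G.Adj a c) (nbd : ¬ G.Adj b d) (nad : ¬ G.Adj a d)
    (hac : a ≠ c) (hbd : b ≠ d) (had : a ≠ d)
    (K : Finset V) (hKcard : K.card = n) (hKcl : G.IsClique ↑K)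
    (hKadj : ∀ z ∈ K, G.Adj a z ∧ G.Adj b z ∧ G.Adj c z ∧ G.Adj d z)
    (hKne : ∀ z ∈ K, z ≠ a ∧ z ≠ b ∧ z ≠ c ∧ z ≠ d) : False := by
  apply h2
  have hab' := hab.ne
  have hbc' := hbc.ne
  have hcd' := hcd.ne
  have hba := hab.symm
  have hcb := hbc.symm
  have hdc := hcd.symm
  have nca : ¬ G.Adj c a := fun h => nac h.symm
  have ndb : ¬ G.Adj d b := fun h => nbd h.symm
  have nda : ¬ G.Adj d a := fun h => nad h.symm
  let eK : {z // z ∈ K} ≃ Fin n := K.equivFinOfCardEq hKcard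
  let e : Fin n → V := fun i => (eK.symm i : V)
  have heK : ∀ i, e i ∈ K := fun i => (eK.symm i).2
  have heInj : Function.Injective e := fun i j h => by
    have := Subtype.ext (p := fun z => z ∈ K) h
    simpa using eK.symm.injective this
  refine ⟨⟨⟨Sum.elim ![a, b, c, d] e, ?_⟩, ?_⟩⟩
  · rintro (i | i) (j | j) h
    · fin_cases i <;> fin_cases j <;> simp_all
    · exfalso
      have hm := hKne _ (heK j)
      fin_cases i <;> simp at h
      · exact hm.1 h.symm
      · exact hm.2.1 h.symm
      · exact hm.2.2.1 h.symm
      · exact hm.2.2.2 h.symm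
    · exfalso
      have hm := hKne _ (heK i)
      fin_cases j <;> simp at h
      · exact hm.1 h
      · exact hm.2.1 h
      · exact hm.2.2.1 h
      · exact hm.2.2.2 h
    · exact congrArg Sum.inr (heInj h)
  · rintro (i | i) (j | j)
    · show G.Adj (![a,b,c,d] i) (![a,b,c,d] j) ↔ (pathGraph 4).Adj i j
      rw [pathGraph_adj]
      fin_cases i <;> fin_cases j <;> simp_all
    · show G.Adj (![a,b,c,d] i) (e j) ↔ True
      have hm := hKadj _ (heK j)
      fin_cases i <;> simp_all
    · show G.Adj (e i) (![a,b,c,d] j) ↔ True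
      have hm := hKadj _ (heK i)
      have hm' : G.Adj (e i) a ∧ G.Adj (e i) b ∧ G.Adj (e i) c ∧ G.Adj (e i) d :=
        ⟨hm.1.symm, hm.2.1.symm, hm.2.2.1.symm, hm.2.2.2.symm⟩
      fin_cases j <;> simp_all
    · show G.Adj (e i) (e j) ↔ (⊤ : SimpleGraph (Fin n)).Adj i j
      simp only [top_adj]
      constructor
      · exact fun h hij => h.ne (congrArg e hij)
      · exact fun hij => hKcl (heK i) (heK j) (fun h => hij (heInj h))

lemma no2k2 {V : Type} {G : SimpleGraph V} (h1 : G.HFree twoK2)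
    {a b c d : V} (hab : G.Adj a b) (hcd : G.Adj c d)
    (nac : ¬ G.Adj a c) (nad : ¬ G.Adj a d) (nbc : ¬ G.Adj b c) (nbd : ¬ G.Adj b d)
    (hac : a ≠ c) (had : a ≠ d) (hbc : b ≠ c) (hbd : b ≠ d) : False := by
  apply h1
  have hab' := hab.ne
  have hcd' := hcd.ne
  refine ⟨⟨⟨Sum.elim ![a, b] ![c, d], ?_⟩, ?_⟩⟩
  · rintro (i | i) (j | j) h <;>
      fin_cases i <;> fin_cases j <;> simp_all
  · have hba := hab.symm
    have hdc := hcd.symm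
    have nca : ¬ G.Adj c a := fun h => nac h.symm
    have nda : ¬ G.Adj d a := fun h => nad h.symm
    have ncb : ¬ G.Adj c b := fun h => nbc h.symm
    have ndb : ¬ G.Adj d b := fun h => nbd h.symm
    rintro (i | i) (j | j) <;>
      fin_cases i <;> fin_cases j <;>
      simp_all [twoK2, DFunLike.coe]

lemma oneSide (n : ℕ) (hn : 1 ≤ n) {V : Type} [Fintype V] [DecidableEq V] (G : SimpleGraph V)
    (h1 : G.HFree twoK2) (h2 : G.HFree (P4JoinK n))
    (L₁ L₂ : Finset V) (hdisj : Disjoint L₁ L₂)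
    (hc1 : G.IsClique ↑L₁) (hc2 : G.IsClique ↑L₂)
    (hcard : L₁.card = L₂.card)
    (homega : ∀ s : Finset V, s ⊆ L₁ ∪ L₂ → G.IsClique ↑s → s.card ≤ L₁.card)
    (hge : 3 * n + 3 ≤ L₁.card) :
    ∀ x ∈ L₁, ∃! y, y ∈ L₂ ∧ ¬ G.Adj x y := by
  classical
  have hne12 : ∀ {x y : V}, x ∈ L₁ → y ∈ L₂ → x ≠ y := fun hx hy h =>
    (Finset.disjoint_left.mp hdisj hx) (h ▸ hy)
  -- existence
  have exist : ∀ x ∈ L₁, ∃ y ∈ L₂, ¬ G.Adj x y := by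
    intro x hx
    by_contra hcon
    push_neg at hcon
    have hcl : G.IsClique ↑(insert x L₂) := by
      rw [Finset.coe_insert]
      exact hc2.insert (fun y hy _ => hcon y hy)
    have hsub : insert x L₂ ⊆ L₁ ∪ L₂ := by
      intro z hz
      rcases Finset.mem_insert.mp hz with h | h
      · exact Finset.mem_union_left _ (h ▸ hx)
      · exact Finset.mem_union_right _ h
    have hh := homega _ hsub hcl
    rw [Finset.card_insert_of_notMem (fun h => hne12 hx h rfl), hcard] at hh
    omega
  -- big clique helper
  have bigCl : ∀ u ∈ L₁, ∀ y₁ ∈ L₂, ∀ y₂ ∈ L₂, y₁ ≠ y₂ →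
      (∀ w ∈ L₁, w ≠ u → G.Adj w y₁) → (∀ w ∈ L₁, w ≠ u → G.Adj w y₂) → False := by
    intro u hu y₁ hy₁ y₂ hy₂ hne h₁ h₂
    set s := insert y₁ (insert y₂ (L₁.erase u)) with hs
    have hmem : ∀ z ∈ s, z = y₁ ∨ z = y₂ ∨ (z ∈ L₁ ∧ z ≠ u) := by
      intro z hz
      simp only [hs, Finset.mem_insert, Finset.mem_erase] at hz
      tauto
    have hcl : G.IsClique ↑s := by
      intro z hz z' hz' hzz'
      simp only [Finset.mem_coe] at hz hz'
      rcases hmem z hz with rfl | rfl | ⟨hzL, hzu⟩ <;>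
        rcases hmem z' hz' with rfl | rfl | ⟨hzL', hzu'⟩
      · exact absurd rfl hzz'
      · exact hc2 hy₁ hy₂ hne
      · exact (h₁ _ hzL' hzu').symm
      · exact hc2 hy₂ hy₁ (Ne.symm hne)
      · exact absurd rfl hzz'
      · exact (h₂ _ hzL' hzu').symm
      · exact h₁ _ hzL hzu
      · exact h₂ _ hzL hzu
      · exact hc1 hzL hzL' hzz'
    have hsub : s ⊆ L₁ ∪ L₂ := by
      intro z hz
      rcases hmem z hz with rfl | rfl | ⟨hzL, _⟩
      · exact Finset.mem_union_right _ hy₁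
      · exact Finset.mem_union_right _ hy₂
      · exact Finset.mem_union_left _ hzL
    have hL1pos : 1 ≤ L₁.card := Finset.card_pos.mpr ⟨u, hu⟩
    have hcardS : s.card = L₁.card - 1 + 2 := by
      rw [hs, Finset.card_insert_of_notMem, Finset.card_insert_of_notMem,
        Finset.card_erase_of_mem hu]
      · exact fun h => hne12 (Finset.mem_of_mem_erase h) hy₂ rfl
      · intro h
        rcases Finset.mem_insert.mp h with h | h
        · exact hne h
        · exact hne12 (Finset.mem_of_mem_erase h) hy₁ rfl
    have hh := homega _ hsub hcl
    omega
  -- the final contradiction from two high-nondegree vertices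
  have final : ∀ u ∈ L₁, ∀ v ∈ L₂,
      n + 3 ≤ (L₂.filter (fun z => ¬ G.Adj u z)).card →
      n + 3 ≤ (L₁.filter (fun z => ¬ G.Adj v z)).card → False := by
    intro u hu v hv hNu hNv
    set Nu := L₂.filter (fun z => ¬ G.Adj u z) with hNudef
    set Nv := L₁.filter (fun z => ¬ G.Adj v z) with hNvdef
    set D := Nu.filter (fun y => ∀ w ∈ L₁, w ≠ u → G.Adj w y) with hD
    have hD1 : D.card ≤ 1 := by
      rw [Finset.card_le_one]
      intro a ha b hb
      by_contra hab
      have ha' := Finset.mem_filter.mp ha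
      have hb' := Finset.mem_filter.mp hb
      exact bigCl u hu a (Finset.mem_filter.mp ha'.1).1 b (Finset.mem_filter.mp hb'.1).1
        hab ha'.2 hb'.2
    -- pick y₁
    have hy1pick : (Nu \ insert v D).Nonempty := by
      have hc1' : Nu.card ≤ (Nu \ insert v D).card + (insert v D).card :=
        Finset.card_le_card_sdiff_add_card
      have hc2' : (insert v D).card ≤ D.card + 1 := Finset.card_insert_le _ _
      rw [← Finset.card_pos]
      omega
    obtain ⟨y₁, hy₁mem⟩ := hy1pick
    obtain ⟨hy₁Nu, hy₁not⟩ := Finset.mem_sdiff.mp hy₁mem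
    obtain ⟨hy₁L2, hy₁nadj⟩ := Finset.mem_filter.mp hy₁Nu
    have hy₁v : y₁ ≠ v := fun h => hy₁not (Finset.mem_insert.mpr (Or.inl h))
    have hy₁D : y₁ ∉ D := fun h => hy₁not (Finset.mem_insert.mpr (Or.inr h))
    have hw : ∃ w ∈ L₁, w ≠ u ∧ ¬ G.Adj w y₁ := by
      by_contra hcon
      push_neg at hcon
      exact hy₁D (Finset.mem_filter.mpr ⟨hy₁Nu, fun w hw hwu => hcon w hw hwu⟩)
    obtain ⟨w₁, hw₁L, hw₁u, hw₁nadj⟩ := hw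
    -- pick y₂
    have hy2pick : (Nu \ insert v {y₁}).Nonempty := by
      have hc1' : Nu.card ≤ (Nu \ insert v {y₁}).card + (insert v ({y₁} : Finset V)).card :=
        Finset.card_le_card_sdiff_add_card
      have hc2' : (insert v ({y₁} : Finset V)).card ≤ 2 := by
        apply le_trans (Finset.card_insert_le _ _)
        simp
      rw [← Finset.card_pos]
      omega
    obtain ⟨y₂, hy₂mem⟩ := hy2pick
    obtain ⟨hy₂Nu, hy₂not⟩ := Finset.mem_sdiff.mp hy₂mem
    obtain ⟨hy₂L2, hy₂nadj⟩ := Finset.mem_filter.mp hy₂Nu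
    have hy₂v : y₂ ≠ v := fun h => hy₂not (Finset.mem_insert.mpr (Or.inl h))
    have hy₂y₁ : y₂ ≠ y₁ := fun h =>
      hy₂not (Finset.mem_insert.mpr (Or.inr (Finset.mem_singleton.mpr h)))
    -- w₁ adjacent to y₂
    have hw₁y₂ : G.Adj w₁ y₂ := by
      by_contra hcon
      exact no2k2 h1 (hc1 hu hw₁L (Ne.symm hw₁u)) (hc2 hy₁L2 hy₂L2 (Ne.symm hy₂y₁))
        hy₁nadj hy₂nadj hw₁nadj hcon (hne12 hu hy₁L2) (hne12 hu hy₂L2)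
        (hne12 hw₁L hy₁L2) (hne12 hw₁L hy₂L2)
    -- common nonneighbour bounds
    have hA : ∀ y ∈ L₂, y ≠ v → ((Nv.filter (fun z => ¬ G.Adj y z)).card ≤ 1) := by
      intro y hyL hyv
      rw [Finset.card_le_one]
      intro z hz z' hz'
      by_contra hzz'
      obtain ⟨hzNv, hznadj⟩ := Finset.mem_filter.mp hz
      obtain ⟨hz'Nv, hz'nadj⟩ := Finset.mem_filter.mp hz'
      obtain ⟨hzL1, hzv⟩ := Finset.mem_filter.mp hzNv
      obtain ⟨hz'L1, hz'v⟩ := Finset.mem_filter.mp hz'Nv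
      exact no2k2 h1 (hc1 hzL1 hz'L1 hzz') (hc2 hv hyL (Ne.symm hyv))
        (fun h => hzv h.symm) (fun h => hznadj h.symm)
        (fun h => hz'v h.symm) (fun h => hz'nadj h.symm)
        (hne12 hzL1 hv) (hne12 hzL1 hyL) (hne12 hz'L1 hv) (hne12 hz'L1 hyL)
    set X := insert u ((Nv.filter (fun z => ¬ G.Adj y₁ z)) ∪
      (Nv.filter (fun z => ¬ G.Adj y₂ z))) with hX
    have hXcard : X.card ≤ 3 := by
      have hu' := Finset.card_union_le (Nv.filter (fun z => ¬ G.Adj y₁ z))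
        (Nv.filter (fun z => ¬ G.Adj y₂ z))
      have h1' := hA y₁ hy₁L2 hy₁v
      have h2' := hA y₂ hy₂L2 hy₂v
      have h3' := Finset.card_insert_le u ((Nv.filter (fun z => ¬ G.Adj y₁ z)) ∪
        (Nv.filter (fun z => ¬ G.Adj y₂ z)))
      rw [← hX] at h3'
      omega
    have hKbig : n ≤ (Nv \ X).card := by
      have hh := Finset.card_le_card_sdiff_add_card (s := Nv) (t := X)
      omega
    obtain ⟨K, hKsub, hKcard⟩ := Finset.exists_subset_card_eq hKbig
    have hKprop : ∀ z ∈ K, z ∈ L₁ ∧ z ≠ u ∧ z ≠ w₁ ∧ G.Adj y₁ z ∧ G.Adj y₂ z := by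
      intro z hz
      obtain ⟨hzNv, hzX⟩ := Finset.mem_sdiff.mp (hKsub hz)
      obtain ⟨hzL1, hzv⟩ := Finset.mem_filter.mp hzNv
      have h1' : G.Adj y₁ z := by
        by_contra hcon
        exact hzX (Finset.mem_insert.mpr (Or.inr (Finset.mem_union_left _
          (Finset.mem_filter.mpr ⟨hzNv, hcon⟩))))
      have h2' : G.Adj y₂ z := by
        by_contra hcon
        exact hzX (Finset.mem_insert.mpr (Or.inr (Finset.mem_union_right _
          (Finset.mem_filter.mpr ⟨hzNv, hcon⟩))))
      have hzu : z ≠ u := fun h => hzX (Finset.mem_insert.mpr (Or.inl h))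
      have hzw : z ≠ w₁ := fun h => hw₁nadj ((h ▸ h1').symm)
      exact ⟨hzL1, hzu, hzw, h1', h2'⟩
    refine nop4kn h2 (hc1 hu hw₁L (Ne.symm hw₁u)) hw₁y₂ (hc2 hy₂L2 hy₁L2 hy₂y₁)
      hy₂nadj hw₁nadj hy₁nadj (hne12 hu hy₂L2) (hne12 hw₁L hy₁L2) (hne12 hu hy₁L2)
      K hKcard ?_ ?_ ?_
    · exact hc1.subset (Finset.coe_subset.mpr (fun z hz => (hKprop z hz).1))
    · intro z hz
      obtain ⟨hzL1, hzu, hzw, h1', h2'⟩ := hKprop z hz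
      exact ⟨hc1 hu hzL1 (Ne.symm hzu), hc1 hw₁L hzL1 (Ne.symm hzw), h2', h1'⟩
    · intro z hz
      obtain ⟨hzL1, hzu, hzw, h1', h2'⟩ := hKprop z hz
      exact ⟨hzu, hzw, hne12 hzL1 hy₂L2, hne12 hzL1 hy₁L2⟩
  -- key lemma
  have key : ∀ x ∈ L₁, ∀ y₁ ∈ L₂, ∀ y₂ ∈ L₂, ∀ w ∈ L₁, y₁ ≠ y₂ →
      ¬ G.Adj x y₁ → ¬ G.Adj x y₂ → w ≠ x → G.Adj w y₁ → ¬ G.Adj w y₂ → False := by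
    intro x hx y₁ hy₁ y₂ hy₂ w hwL hne nxy₁ nxy₂ hwx hwy₁ nwy₂
    have hxw : G.Adj x w := hc1 hx hwL (Ne.symm hwx)
    have hy₁y₂ : G.Adj y₁ y₂ := hc2 hy₁ hy₂ hne
    set S₂ := L₂.filter (fun z => G.Adj x z ∧ G.Adj w z) with hS₂
    have hS₂card : S₂.card < n := by
      by_contra hcon
      push_neg at hcon
      obtain ⟨K, hKsub, hKcard⟩ := Finset.exists_subset_card_eq hcon
      have hKL2 : ∀ z ∈ K, z ∈ L₂ ∧ G.Adj x z ∧ G.Adj w z := by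
        intro z hz
        have := Finset.mem_filter.mp (hKsub hz)
        exact ⟨this.1, this.2⟩
      refine nop4kn h2 hxw hwy₁ hy₁y₂ nxy₁ nwy₂ nxy₂
        (hne12 hx hy₁) (hne12 hwL hy₂) (hne12 hx hy₂) K hKcard ?_ ?_ ?_
      · exact hc2.subset (Finset.coe_subset.mpr (fun z hz => (hKL2 z hz).1))
      · intro z hz
        obtain ⟨hzL2, hzx, hzw⟩ := hKL2 z hz
        have hzy₁ : z ≠ y₁ := fun h => nxy₁ (h ▸ hzx)
        have hzy₂ : z ≠ y₂ := fun h => nxy₂ (h ▸ hzx)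
        exact ⟨hzx, hzw, hc2 hy₁ hzL2 (Ne.symm hzy₁), hc2 hy₂ hzL2 (Ne.symm hzy₂)⟩
      · intro z hz
        obtain ⟨hzL2, hzx, hzw⟩ := hKL2 z hz
        have hzy₁ : z ≠ y₁ := fun h => nxy₁ (h ▸ hzx)
        have hzy₂ : z ≠ y₂ := fun h => nxy₂ (h ▸ hzx)
        exact ⟨Ne.symm (hne12 hx hzL2), Ne.symm (hne12 hwL hzL2), hzy₁, hzy₂⟩
    set S₁ := L₁.filter (fun z => G.Adj y₁ z ∧ G.Adj y₂ z) with hS₁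
    have hS₁card : S₁.card < n := by
      by_contra hcon
      push_neg at hcon
      obtain ⟨K, hKsub, hKcard⟩ := Finset.exists_subset_card_eq hcon
      have hKL1 : ∀ z ∈ K, z ∈ L₁ ∧ G.Adj y₁ z ∧ G.Adj y₂ z := by
        intro z hz
        have := Finset.mem_filter.mp (hKsub hz)
        exact ⟨this.1, this.2⟩
      refine nop4kn h2 hxw hwy₁ hy₁y₂ nxy₁ nwy₂ nxy₂
        (hne12 hx hy₁) (hne12 hwL hy₂) (hne12 hx hy₂) K hKcard ?_ ?_ ?_
      · exact hc1.subset (Finset.coe_subset.mpr (fun z hz => (hKL1 z hz).1))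
      · intro z hz
        obtain ⟨hzL1, hzy₁, hzy₂⟩ := hKL1 z hz
        have hzx : z ≠ x := fun h => nxy₁ ((h ▸ hzy₁).symm)
        have hzw : z ≠ w := fun h => nwy₂ ((h ▸ hzy₂).symm)
        exact ⟨hc1 hx hzL1 (Ne.symm hzx), hc1 hwL hzL1 (Ne.symm hzw), hzy₁, hzy₂⟩
      · intro z hz
        obtain ⟨hzL1, hzy₁, hzy₂⟩ := hKL1 z hz
        have hzx : z ≠ x := fun h => nxy₁ ((h ▸ hzy₁).symm)
        have hzw : z ≠ w := fun h => nwy₂ ((h ▸ hzy₂).symm)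
        exact ⟨hzx, hzw, hne12 hzL1 hy₁, hne12 hzL1 hy₂⟩
    -- counting in L₂
    set NBx := L₂.filter (fun z => ¬ G.Adj x z) with hNBx
    set NBw := L₂.filter (fun z => ¬ G.Adj w z) with hNBw
    have hcover2 : L₂ ⊆ S₂ ∪ (NBx ∪ NBw) := by
      intro z hz
      by_cases hxz : G.Adj x z
      · by_cases hwz : G.Adj w z
        · exact Finset.mem_union_left _ (Finset.mem_filter.mpr ⟨hz, hxz, hwz⟩)
        · exact Finset.mem_union_right _ (Finset.mem_union_right _
            (Finset.mem_filter.mpr ⟨hz, hwz⟩))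
      · exact Finset.mem_union_right _ (Finset.mem_union_left _
          (Finset.mem_filter.mpr ⟨hz, hxz⟩))
    have hinter2 : 1 ≤ (NBx ∩ NBw).card := by
      apply Finset.card_pos.mpr
      exact ⟨y₂, Finset.mem_inter.mpr ⟨Finset.mem_filter.mpr ⟨hy₂, nxy₂⟩,
        Finset.mem_filter.mpr ⟨hy₂, nwy₂⟩⟩⟩
    have hub2 : L₂.card ≤ S₂.card + (NBx ∪ NBw).card :=
      le_trans (Finset.card_le_card hcover2) (Finset.card_union_le _ _)
    have hsum2 : (NBx ∪ NBw).card + (NBx ∩ NBw).card = NBx.card + NBw.card :=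
      Finset.card_union_add_card_inter _ _
    have hL2 : 3 * n + 3 ≤ L₂.card := hcard ▸ hge
    have hu' : n + 3 ≤ NBx.card ∨ n + 3 ≤ NBw.card := by omega
    -- counting in L₁
    set NBy₁ := L₁.filter (fun z => ¬ G.Adj y₁ z) with hNBy₁
    set NBy₂ := L₁.filter (fun z => ¬ G.Adj y₂ z) with hNBy₂
    have hcover1 : L₁ ⊆ S₁ ∪ (NBy₁ ∪ NBy₂) := by
      intro z hz
      by_cases h1z : G.Adj y₁ z
      · by_cases h2z : G.Adj y₂ z
        · exact Finset.mem_union_left _ (Finset.mem_filter.mpr ⟨hz, h1z, h2z⟩)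
        · exact Finset.mem_union_right _ (Finset.mem_union_right _
            (Finset.mem_filter.mpr ⟨hz, h2z⟩))
      · exact Finset.mem_union_right _ (Finset.mem_union_left _
          (Finset.mem_filter.mpr ⟨hz, h1z⟩))
    have hinter1 : 1 ≤ (NBy₁ ∩ NBy₂).card := by
      apply Finset.card_pos.mpr
      exact ⟨x, Finset.mem_inter.mpr ⟨Finset.mem_filter.mpr ⟨hx, fun h => nxy₁ h.symm⟩,
        Finset.mem_filter.mpr ⟨hx, fun h => nxy₂ h.symm⟩⟩⟩
    have hub1 : L₁.card ≤ S₁.card + (NBy₁ ∪ NBy₂).card :=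
      le_trans (Finset.card_le_card hcover1) (Finset.card_union_le _ _)
    have hsum1 : (NBy₁ ∪ NBy₂).card + (NBy₁ ∩ NBy₂).card = NBy₁.card + NBy₂.card :=
      Finset.card_union_add_card_inter _ _
    have hv' : n + 3 ≤ NBy₁.card ∨ n + 3 ≤ NBy₂.card := by omega
    rcases hu' with h | h <;> rcases hv' with h' | h'
    · exact final x hx y₁ hy₁ h h'
    · exact final x hx y₂ hy₂ h h'
    · exact final w hwL y₁ hy₁ h h'
    · exact final w hwL y₂ hy₂ h h'
  -- packaging
  intro x hx
  obtain ⟨y, hyL, hyn⟩ := exist x hx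
  refine ⟨y, ⟨hyL, hyn⟩, ?_⟩
  rintro y' ⟨hy'L, hy'n⟩
  by_contra hne
  by_cases hA : ∃ w ∈ L₁, w ≠ x ∧ (¬ G.Adj w y' ∨ ¬ G.Adj w y)
  · obtain ⟨w, hwL, hwx, hcase⟩ := hA
    by_cases hwy' : G.Adj w y'
    · have hnwy : ¬ G.Adj w y := by tauto
      exact key x hx y' hy'L y hyL w hwL hne hy'n hyn hwx hwy' hnwy
    · by_cases hwy : G.Adj w y
      · exact key x hx y hyL y' hy'L w hwL (Ne.symm hne) hyn hy'n hwx hwy hwy'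
      · exact no2k2 h1 (hc1 hx hwL (Ne.symm hwx)) (hc2 hy'L hyL hne) hy'n hyn hwy' hwy
          (hne12 hx hy'L) (hne12 hx hyL) (hne12 hwL hy'L) (hne12 hwL hyL)
  · push_neg at hA
    exact bigCl x hx y' hy'L y hyL hne (fun w hw hwx => (hA w hw hwx).1)
      (fun w hw hwx => (hA w hw hwx).2)

/-- In a `(2K₂, P₄ ∨ Kₙ)`-free graph, if `L₁, L₂` are disjoint cliques with
`|L₁| = |L₂| = ω(G[L₁ ∪ L₂]) ≥ 3n + 3`, then every vertex of `L₁` has exactly one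
nonneighbour in `L₂`, and vice versa. -/
theorem stmt18 (n : ℕ) (hn : 1 ≤ n) {V : Type} [Fintype V] [DecidableEq V] (G : SimpleGraph V)
    (h1 : G.HFree twoK2) (h2 : G.HFree (P4JoinK n))
    (L₁ L₂ : Finset V) (hdisj : Disjoint L₁ L₂)
    (hc1 : G.IsClique ↑L₁) (hc2 : G.IsClique ↑L₂)
    (hcard : L₁.card = L₂.card)
    (homega : ∀ s : Finset V, s ⊆ L₁ ∪ L₂ → G.IsClique ↑s → s.card ≤ L₁.card)
    (hge : 3 * n + 3 ≤ L₁.card) :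
    (∀ x ∈ L₁, ∃! y, y ∈ L₂ ∧ ¬ G.Adj x y) ∧
    (∀ y ∈ L₂, ∃! x, x ∈ L₁ ∧ ¬ G.Adj y x) := by
  constructor
  · exact oneSide n hn G h1 h2 L₁ L₂ hdisj hc1 hc2 hcard homega hge
  · refine oneSide n hn G h1 h2 L₂ L₁ hdisj.symm hc2 hc1 hcard.symm ?_ (hcard ▸ hge)
    intro s hs hcl
    rw [← hcard]
    exact homega s (by rwa [Finset.union_comm]) hcl
end

section
/- Let n be a positive integer and let G be a (2K₂, P₄ ∨ Kₙ)-free graph. Suppose L₁ and L₂ are (not necessarily disjoint) cliques in G with |L₁| = |L₂| = ω(G[L₁ ∪ L₂]) ≥ 4n + 2, where G[L₁ ∪ L₂] is the subgraph induced by L₁ ∪ L₂. Then every vertex of L₁\L₂ has exactly one nonneighbour in L₂\L₁, and every vertex of L₂\L₁ has exactly one nonneighbour in L₁\L₂. -/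
open SimpleGraph

set_option linter.unusedSectionVars false
set_option linter.unusedTactic false
set_option linter.unreachableTactic false

section Helpers

variable {V : Type} [Fintype V] [DecidableEq V] {G : SimpleGraph V}

lemma clique_adj {s : Finset V} (hc : G.IsClique ↑s) {u v : V} (hu : u ∈ s) (hv : v ∈ s)
    (h : u ≠ v) : G.Adj u v :=
  hc (Finset.mem_coe.mpr hu) (Finset.mem_coe.mpr hv) h

lemma no2K2 (h1 : G.HFree twoK2) {a b c d : V} (hab : G.Adj a b) (hcd : G.Adj c d)
    (h1' : ¬ G.Adj a c) (h2' : ¬ G.Adj a d) (h3' : ¬ G.Adj b c) (h4' : ¬ G.Adj b d) : False := by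
  have hac : a ≠ c := by rintro rfl; exact h2' hcd
  have had : a ≠ d := by rintro rfl; exact h1' hcd.symm
  have hbc : b ≠ c := by rintro rfl; exact h4' hcd
  have hbd : b ≠ d := by rintro rfl; exact h3' hcd.symm
  apply h1
  refine ⟨⟨⟨Sum.elim (fun i => if i = 0 then a else b) (fun i => if i = 0 then c else d), ?_⟩, ?_⟩⟩
  · rintro (i | i) (j | j) h <;> fin_cases i <;> fin_cases j <;> simp_all
  · rintro (i | i) (j | j) <;> fin_cases i <;> fin_cases j <;>
      simp_all [twoK2, SimpleGraph.sum_adj] <;>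
      first
        | exact hab
        | exact hab.symm
        | exact hcd
        | exact hcd.symm
        | exact G.irrefl
        | exact h1'
        | exact h2'
        | exact h3'
        | exact h4'
        | exact fun h => h1' h.symm
        | exact fun h => h2' h.symm
        | exact fun h => h3' h.symm
        | exact fun h => h4' h.symm

lemma noP4Kn {n : ℕ} (h2 : G.HFree (P4JoinK n)) {v0 v1 v2 v3 : V} {K : Finset V}
    (e01 : G.Adj v0 v1) (e12 : G.Adj v1 v2) (e23 : G.Adj v2 v3)
    (n02 : ¬ G.Adj v0 v2) (n03 : ¬ G.Adj v0 v3) (n13 : ¬ G.Adj v1 v3)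
    (hK : G.IsClique ↑K) (hcard : n ≤ K.card)
    (hadj : ∀ k ∈ K, G.Adj k v0 ∧ G.Adj k v1 ∧ G.Adj k v2 ∧ G.Adj k v3) : False := by
  obtain ⟨t, htK, htc⟩ := Finset.exists_subset_card_eq hcard
  set g : Fin n → V := fun i => ((Finset.equivFinOfCardEq htc).symm i : V) with hg
  have hgmem : ∀ i, g i ∈ K := fun i => htK ((Finset.equivFinOfCardEq htc).symm i).2
  have hginj : Function.Injective g := by
    intro i j h
    exact (Finset.equivFinOfCardEq htc).symm.injective (Subtype.ext h)
  have h02 : v0 ≠ v2 := by rintro rfl; exact n03 e23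
  have h03 : v0 ≠ v3 := by rintro rfl; exact n13 e01.symm
  have h13 : v1 ≠ v3 := by rintro rfl; exact n03 e01
  have hgne : ∀ i, ∀ j : Fin 4, g i ≠ (![v0, v1, v2, v3]) j := by
    intro i j h
    have hk := hadj _ (hgmem i)
    fin_cases j <;> simp at h <;> subst h <;>
      first
        | exact G.irrefl hk.1
        | exact G.irrefl hk.2.1
        | exact G.irrefl hk.2.2.1
        | exact G.irrefl hk.2.2.2
  apply h2
  refine ⟨⟨⟨Sum.elim (![v0, v1, v2, v3]) g, ?_⟩, ?_⟩⟩
  · rintro (i | i) (j | j) h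
    · simp only [Sum.elim_inl] at h
      congr 1
      fin_cases i <;> fin_cases j <;> simp_all <;>
        first
          | rfl
          | exact absurd h e01.ne
          | exact absurd h.symm e01.ne
          | exact absurd h e12.ne
          | exact absurd h.symm e12.ne
          | exact absurd h e23.ne
          | exact absurd h.symm e23.ne
          | exact absurd h h02
          | exact absurd h.symm h02
          | exact absurd h h03
          | exact absurd h.symm h03
          | exact absurd h h13
          | exact absurd h.symm h13
    · exact absurd h.symm (hgne j i)
    · exact absurd h (hgne i j)
    · exact congrArg Sum.inr (hginj h)
  · rintro (i | i) (j | j)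
    · have hre : (P4JoinK n).Adj (Sum.inl i) (Sum.inl j) ↔ (pathGraph 4).Adj i j := Iff.rfl
      show G.Adj _ _ ↔ _
      rw [hre, pathGraph_adj]
      fin_cases i <;> fin_cases j <;>
        simp <;>
        first
          | exact fun h => G.irrefl h
          | exact e01
          | exact e01.symm
          | exact e12
          | exact e12.symm
          | exact e23
          | exact e23.symm
          | exact n02
          | exact (fun h => n02 h.symm)
          | exact n03
          | exact (fun h => n03 h.symm)
          | exact n13
          | exact (fun h => n13 h.symm)
    · show G.Adj _ _ ↔ True
      simp only [iff_true]
      have hk := hadj _ (hgmem j)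
      fin_cases i <;> simp <;>
        first
          | exact hk.1.symm
          | exact hk.2.1.symm
          | exact hk.2.2.1.symm
          | exact hk.2.2.2.symm
    · show G.Adj _ _ ↔ True
      simp only [iff_true]
      have hk := hadj _ (hgmem i)
      fin_cases j <;> simp <;>
        first
          | exact hk.1
          | exact hk.2.1
          | exact hk.2.2.1
          | exact hk.2.2.2
    · show G.Adj (g i) (g j) ↔ (⊤ : SimpleGraph (Fin n)).Adj i j
      simp only [top_adj]
      constructor
      · intro h hij
        exact G.irrefl (hij ▸ h)
      · intro hij
        exact hK (Finset.mem_coe.mpr (hgmem i)) (Finset.mem_coe.mpr (hgmem j))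
          (fun h => hij (hginj h))

/-- The set of nonneighbours of `x` inside `s`. -/
noncomputable def nonNbrs (G : SimpleGraph V) (s : Finset V) (x : V) : Finset V :=
  @Finset.filter _ (fun a => ¬ G.Adj a x) (Classical.decPred _) s

lemma mem_nonNbrs {s : Finset V} {x a : V} :
    a ∈ nonNbrs G s x ↔ a ∈ s ∧ ¬ G.Adj a x :=
  @Finset.mem_filter _ _ (Classical.decPred _) _ _

lemma nonNbrs_subset {s : Finset V} {x : V} : nonNbrs G s x ⊆ s :=
  fun _ h => (mem_nonNbrs.mp h).1

end Helpers

section Engine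

variable {V : Type} [Fintype V] [DecidableEq V] {G : SimpleGraph V}

lemma engine (n : ℕ)
    (h1 : G.HFree twoK2) (h2 : G.HFree (P4JoinK n))
    (L₁ L₂ : Finset V) (hc1 : G.IsClique ↑L₁) (hc2 : G.IsClique ↑L₂)
    (homega : ∀ s : Finset V, s ⊆ L₁ ∪ L₂ → G.IsClique ↑s → s.card ≤ L₁.card)
    {w y : V} (hw : w ∈ L₁ \ L₂) (hy : y ∈ L₂ \ L₁) (hwy : ¬ G.Adj w y)
    (hN : n + 1 ≤ (nonNbrs G (L₁ \ L₂) y).card)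
    (hM : 3 ≤ (nonNbrs G (L₂ \ L₁) w).card) : False := by
  obtain ⟨hwL₁, hwL₂⟩ := Finset.mem_sdiff.mp hw
  obtain ⟨hyL₂, hyL₁⟩ := Finset.mem_sdiff.mp hy
  set Ny := nonNbrs G (L₁ \ L₂) y with hNydef
  set Mw := nonNbrs G (L₂ \ L₁) w with hMwdef
  have hymem : y ∈ Mw := mem_nonNbrs.mpr ⟨hy, fun h => hwy h.symm⟩
  have hwmem : w ∈ Ny := mem_nonNbrs.mpr ⟨hw, hwy⟩
  set B' := Mw.erase y with hB'def
  have hB'card : 2 ≤ B'.card := by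
    rw [hB'def, Finset.card_erase_of_mem hymem]; omega
  have hB'facts : ∀ b ∈ B', b ∈ L₂ ∧ b ∉ L₁ ∧ b ≠ y ∧ ¬ G.Adj w b := by
    intro b hb
    have h₁ := Finset.ne_of_mem_erase hb
    obtain ⟨hbB, hbw⟩ := mem_nonNbrs.mp (Finset.mem_of_mem_erase hb)
    obtain ⟨hbL₂, hbL₁⟩ := Finset.mem_sdiff.mp hbB
    exact ⟨hbL₂, hbL₁, h₁, fun h => hbw h.symm⟩
  have hNyfacts : ∀ a ∈ Ny, a ∈ L₁ ∧ a ∉ L₂ ∧ ¬ G.Adj a y := by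
    intro a ha
    obtain ⟨haA, hay⟩ := mem_nonNbrs.mp ha
    obtain ⟨h₁, h₂⟩ := Finset.mem_sdiff.mp haA
    exact ⟨h₁, h₂, hay⟩
  -- complete bipartite between Ny \ {w} and Mw \ {y}
  have CB : ∀ a' ∈ Ny, a' ≠ w → ∀ b ∈ Mw, b ≠ y → G.Adj a' b := by
    intro a' ha' haw b hb hby
    by_contra hnadj
    obtain ⟨ha'L₁, ha'L₂, ha'y⟩ := hNyfacts a' ha'
    obtain ⟨hbB, hbw⟩ := mem_nonNbrs.mp hb
    obtain ⟨hbL₂, hbL₁⟩ := Finset.mem_sdiff.mp hbB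
    exact no2K2 h1 (clique_adj hc1 ha'L₁ hwL₁ haw)
      (clique_adj hc2 hyL₂ hbL₂ (Ne.symm hby)) ha'y hnadj hwy (fun h => hbw h.symm)
  by_cases hcase : ∃ b ∈ B', ∃ z ∈ L₁ \ L₂, z ≠ w ∧ ¬ G.Adj z b
  · obtain ⟨b₂, hb₂, z, hzA, hzw, hzb₂⟩ := hcase
    obtain ⟨hb₂L₂, hb₂L₁, hb₂y, hwb₂⟩ := hB'facts b₂ hb₂
    obtain ⟨b₁, hb₁, hb₁b₂⟩ := Finset.exists_mem_ne (s := B') (by omega) b₂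
    obtain ⟨hb₁L₂, hb₁L₁, hb₁y, hwb₁⟩ := hB'facts b₁ hb₁
    obtain ⟨hzL₁, hzL₂⟩ := Finset.mem_sdiff.mp hzA
    have hzy : G.Adj z y := by
      by_contra h
      exact hzb₂ (CB z (mem_nonNbrs.mpr ⟨hzA, h⟩) hzw b₂ (Finset.mem_of_mem_erase hb₂) hb₂y)
    have hzb₁ : G.Adj z b₁ := by
      by_contra h
      exact no2K2 h1 (clique_adj hc1 hzL₁ hwL₁ hzw)
        (clique_adj hc2 hb₁L₂ hb₂L₂ hb₁b₂) h hzb₂ hwb₁ hwb₂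
    -- induced P4 : w — z — b₁ — b₂
    refine noP4Kn h2 (clique_adj hc1 hwL₁ hzL₁ (Ne.symm hzw)) hzb₁
      (clique_adj hc2 hb₁L₂ hb₂L₂ hb₁b₂) hwb₁ hwb₂ hzb₂
      (hK := ?_) (K := Ny.erase w) ?_ ?_
    · apply hc1.subset
      intro u hu
      exact Finset.mem_coe.mpr ((hNyfacts u (Finset.mem_of_mem_erase (Finset.mem_coe.mp hu))).1)
    · rw [Finset.card_erase_of_mem hwmem]; omega
    · intro k hk
      have hkw := Finset.ne_of_mem_erase hk
      have hkNy := Finset.mem_of_mem_erase hk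
      obtain ⟨hkL₁, hkL₂, hky⟩ := hNyfacts k hkNy
      have hkz : k ≠ z := by rintro rfl; exact hky hzy
      exact ⟨clique_adj hc1 hkL₁ hwL₁ hkw, clique_adj hc1 hkL₁ hzL₁ hkz,
        CB k hkNy hkw b₁ (Finset.mem_of_mem_erase hb₁) hb₁y,
        CB k hkNy hkw b₂ (Finset.mem_of_mem_erase hb₂) hb₂y⟩
  · push_neg at hcase
    set S := (L₁.erase w) ∪ B' with hSdef
    have hSsub : S ⊆ L₁ ∪ L₂ := by
      apply Finset.union_subset
      · exact (Finset.erase_subset _ _).trans Finset.subset_union_left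
      · exact fun b hb => Finset.mem_union_right _ ((hB'facts b hb).1)
    have hSclique : G.IsClique ↑S := by
      intro u hu v hv huv
      rw [Finset.mem_coe, hSdef, Finset.mem_union] at hu hv
      rcases hu with hu | hu <;> rcases hv with hv | hv
      · exact clique_adj hc1 (Finset.mem_of_mem_erase hu) (Finset.mem_of_mem_erase hv) huv
      · obtain ⟨hvL₂, hvL₁, hvy, hwv⟩ := hB'facts v hv
        have huL₁ := Finset.mem_of_mem_erase hu
        by_cases huL₂ : u ∈ L₂
        · exact clique_adj hc2 huL₂ hvL₂ huv
        · exact hcase v hv u (Finset.mem_sdiff.mpr ⟨huL₁, huL₂⟩) (Finset.ne_of_mem_erase hu)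
      · obtain ⟨huL₂, huL₁, huy, hwu⟩ := hB'facts u hu
        have hvL₁ := Finset.mem_of_mem_erase hv
        by_cases hvL₂ : v ∈ L₂
        · exact clique_adj hc2 huL₂ hvL₂ huv
        · exact (hcase u hu v (Finset.mem_sdiff.mpr ⟨hvL₁, hvL₂⟩) (Finset.ne_of_mem_erase hv)).symm
      · exact clique_adj hc2 (hB'facts u hu).1 (hB'facts v hv).1 huv
    have hdisj : Disjoint (L₁.erase w) B' := by
      rw [Finset.disjoint_left]
      intro u hu hu'
      exact (hB'facts u hu').2.1 (Finset.mem_of_mem_erase hu)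
    have hScard : S.card = L₁.card - 1 + B'.card := by
      rw [hSdef, Finset.card_union_of_disjoint hdisj, Finset.card_erase_of_mem hwL₁]
    have hL₁pos : 1 ≤ L₁.card := Finset.card_pos.mpr ⟨w, hwL₁⟩
    have := homega S hSsub hSclique
    omega

end Engine

section NoTwo

variable {V : Type} [Fintype V] [DecidableEq V] {G : SimpleGraph V}

lemma noTwoA (n : ℕ) (hn : 1 ≤ n)
    (h1 : G.HFree twoK2) (h2 : G.HFree (P4JoinK n))
    (L₁ L₂ : Finset V) (hc1 : G.IsClique ↑L₁) (hc2 : G.IsClique ↑L₂)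
    (hcard : L₁.card = L₂.card)
    (homega : ∀ s : Finset V, s ⊆ L₁ ∪ L₂ → G.IsClique ↑s → s.card ≤ L₁.card)
    (hge : 4 * n + 2 ≤ L₁.card)
    {x y₁ y₂ a : V} (hx : x ∈ L₁ \ L₂) (hy₁ : y₁ ∈ L₂ \ L₁) (hy₂ : y₂ ∈ L₂ \ L₁)
    (hne : y₁ ≠ y₂) (hxy₁ : ¬ G.Adj x y₁) (hxy₂ : ¬ G.Adj x y₂)
    (ha : a ∈ L₁ \ L₂) (hax : a ≠ x) (hay₁ : G.Adj a y₁) (hay₂ : ¬ G.Adj a y₂) : False := by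
  have homega' : ∀ s : Finset V, s ⊆ L₂ ∪ L₁ → G.IsClique ↑s → s.card ≤ L₂.card := by
    intro s hs hcl
    rw [← hcard]
    exact homega s (by rwa [Finset.union_comm]) hcl
  obtain ⟨hxL₁, hxL₂⟩ := Finset.mem_sdiff.mp hx
  obtain ⟨haL₁, haL₂⟩ := Finset.mem_sdiff.mp ha
  obtain ⟨hy₁L₂, hy₁L₁⟩ := Finset.mem_sdiff.mp hy₁
  obtain ⟨hy₂L₂, hy₂L₁⟩ := Finset.mem_sdiff.mp hy₂
  set Ny₁ := nonNbrs G (L₁ \ L₂) y₁ with hNy₁def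
  set Ny₂ := nonNbrs G (L₁ \ L₂) y₂ with hNy₂def
  set Mx := nonNbrs G (L₂ \ L₁) x with hMxdef
  set Ma := nonNbrs G (L₂ \ L₁) a with hMadef
  have hxN1 : x ∈ Ny₁ := mem_nonNbrs.mpr ⟨hx, hxy₁⟩
  have hxN2 : x ∈ Ny₂ := mem_nonNbrs.mpr ⟨hx, hxy₂⟩
  have haN2 : a ∈ Ny₂ := mem_nonNbrs.mpr ⟨ha, hay₂⟩
  have hy₁Mx : y₁ ∈ Mx := mem_nonNbrs.mpr ⟨hy₁, fun h => hxy₁ h.symm⟩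
  have hy₂Mx : y₂ ∈ Mx := mem_nonNbrs.mpr ⟨hy₂, fun h => hxy₂ h.symm⟩
  have hy₂Ma : y₂ ∈ Ma := mem_nonNbrs.mpr ⟨hy₂, fun h => hay₂ h.symm⟩
  -- the induced P4 : x — a — y₁ — y₂
  have e01 : G.Adj x a := clique_adj hc1 hxL₁ haL₁ (Ne.symm hax)
  have e12 : G.Adj a y₁ := hay₁
  have e23 : G.Adj y₁ y₂ := clique_adj hc2 hy₁L₂ hy₂L₂ hne
  -- F1
  have hF1 : 3 * n + 3 ≤ Ny₁.card + Ny₂.card := by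
    set U : Finset V := Ny₁ ∪ Ny₂ with hUdef
    have hUsub : U ⊆ L₁ :=
      Finset.union_subset (nonNbrs_subset.trans Finset.sdiff_subset)
        (nonNbrs_subset.trans Finset.sdiff_subset)
    have hKn : ¬ (n ≤ (L₁ \ U).card) := by
      intro hcard'
      refine noP4Kn h2 e01 e12 e23 hxy₁ hxy₂ hay₂
        (hc1.subset (by exact_mod_cast Finset.sdiff_subset)) hcard' ?_
      intro k hk
      obtain ⟨hkL₁, hkU⟩ := Finset.mem_sdiff.mp hk
      rw [hUdef, Finset.mem_union] at hkU
      push_neg at hkU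
      have hkx : k ≠ x := by rintro rfl; exact hkU.1 hxN1
      have hka : k ≠ a := by rintro rfl; exact hkU.2 haN2
      have hky₁ : G.Adj k y₁ := by
        by_cases hkL₂ : k ∈ L₂
        · exact clique_adj hc2 hkL₂ hy₁L₂ (by rintro rfl; exact hy₁L₁ hkL₁)
        · by_contra h
          exact hkU.1 (mem_nonNbrs.mpr ⟨Finset.mem_sdiff.mpr ⟨hkL₁, hkL₂⟩, h⟩)
      have hky₂ : G.Adj k y₂ := by
        by_cases hkL₂ : k ∈ L₂
        · exact clique_adj hc2 hkL₂ hy₂L₂ (by rintro rfl; exact hy₂L₁ hkL₁)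
        · by_contra h
          exact hkU.2 (mem_nonNbrs.mpr ⟨Finset.mem_sdiff.mpr ⟨hkL₁, hkL₂⟩, h⟩)
      exact ⟨clique_adj hc1 hkL₁ hxL₁ hkx, clique_adj hc1 hkL₁ haL₁ hka, hky₁, hky₂⟩
    have h1' : (L₁ \ U).card = L₁.card - U.card := Finset.card_sdiff_of_subset hUsub
    have h2' : U.card ≤ L₁.card := Finset.card_le_card hUsub
    have h3' : U.card ≤ Ny₁.card + Ny₂.card := Finset.card_union_le _ _
    have h4' : (Ny₁ ∪ Ny₂).card = U.card := by rw [hUdef]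
    omega
  -- F2
  have hF2 : 3 * n + 3 ≤ Mx.card + Ma.card := by
    set U : Finset V := Mx ∪ Ma with hUdef
    have hUsub : U ⊆ L₂ :=
      Finset.union_subset (nonNbrs_subset.trans Finset.sdiff_subset)
        (nonNbrs_subset.trans Finset.sdiff_subset)
    have hKn : ¬ (n ≤ (L₂ \ U).card) := by
      intro hcard'
      refine noP4Kn h2 e01 e12 e23 hxy₁ hxy₂ hay₂
        (hc2.subset (by exact_mod_cast Finset.sdiff_subset)) hcard' ?_
      intro k hk
      obtain ⟨hkL₂, hkU⟩ := Finset.mem_sdiff.mp hk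
      rw [hUdef, Finset.mem_union] at hkU
      push_neg at hkU
      have hky₁ : k ≠ y₁ := by rintro rfl; exact hkU.1 hy₁Mx
      have hky₂ : k ≠ y₂ := by rintro rfl; exact hkU.2 hy₂Ma
      have hkx : G.Adj k x := by
        by_cases hkL₁ : k ∈ L₁
        · exact clique_adj hc1 hkL₁ hxL₁ (by rintro rfl; exact hxL₂ hkL₂)
        · by_contra h
          exact hkU.1 (mem_nonNbrs.mpr ⟨Finset.mem_sdiff.mpr ⟨hkL₂, hkL₁⟩, h⟩)
      have hka : G.Adj k a := by
        by_cases hkL₁ : k ∈ L₁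
        · exact clique_adj hc1 hkL₁ haL₁ (by rintro rfl; exact haL₂ hkL₂)
        · by_contra h
          exact hkU.2 (mem_nonNbrs.mpr ⟨Finset.mem_sdiff.mpr ⟨hkL₂, hkL₁⟩, h⟩)
      exact ⟨hkx, hka, clique_adj hc2 hkL₂ hy₁L₂ hky₁, clique_adj hc2 hkL₂ hy₂L₂ hky₂⟩
    have h1' : (L₂ \ U).card = L₂.card - U.card := Finset.card_sdiff_of_subset hUsub
    have h2' : U.card ≤ L₂.card := Finset.card_le_card hUsub
    have h3' : U.card ≤ Mx.card + Ma.card := Finset.card_union_le _ _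
    have h4' : (Mx ∪ Ma).card = U.card := by rw [hUdef]
    omega
  have hMx2 : 2 ≤ Mx.card :=
    Finset.one_lt_card.mpr ⟨y₁, hy₁Mx, y₂, hy₂Mx, hne⟩
  by_cases hMx3 : 3 ≤ Mx.card
  · by_cases hN2 : n + 1 ≤ Ny₂.card
    · exact engine n h1 h2 L₁ L₂ hc1 hc2 homega hx hy₂ hxy₂ hN2 hMx3
    · exact engine n h1 h2 L₁ L₂ hc1 hc2 homega hx hy₁ hxy₁ (by rw [← hNy₁def]; omega) hMx3
  · have hMa1 : n + 1 ≤ Ma.card := by omega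
    by_cases hN23 : 3 ≤ Ny₂.card
    · exact engine n h1 h2 L₂ L₁ hc2 hc1 homega' hy₂ ha (fun h => hay₂ h.symm) hMa1 hN23
    · -- Ny₂ = {x, a}, Mx = {y₁, y₂}
      have hN2eq : Ny₂ = {x, a} := by
        refine (Finset.eq_of_subset_of_card_le ?_ ?_).symm
        · intro u hu
          rcases Finset.mem_insert.mp hu with rfl | hu
          · exact hxN2
          · exact (Finset.mem_singleton.mp hu) ▸ haN2
        · rw [Finset.card_insert_of_notMem (by simpa using Ne.symm hax),
            Finset.card_singleton]
          omega
      have hMxeq : Mx = {y₁, y₂} := by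
        refine (Finset.eq_of_subset_of_card_le ?_ ?_).symm
        · intro u hu
          rcases Finset.mem_insert.mp hu with rfl | hu
          · exact hy₁Mx
          · exact (Finset.mem_singleton.mp hu) ▸ hy₂Mx
        · rw [Finset.card_insert_of_notMem (by simpa using hne), Finset.card_singleton]
          omega
      have hN2card : Ny₂.card = 2 := by
        rw [hN2eq, Finset.card_insert_of_notMem (by simpa using Ne.symm hax),
          Finset.card_singleton]
      have hN1big : 3 * n + 1 ≤ Ny₁.card := by omega
      by_cases hw3 : ∃ w ∈ Ny₁, 3 ≤ (nonNbrs G (L₂ \ L₁) w).card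
      · obtain ⟨w, hwN1, hw3'⟩ := hw3
        obtain ⟨hwA, hwy₁⟩ := mem_nonNbrs.mp hwN1
        exact engine n h1 h2 L₁ L₂ hc1 hc2 homega hwA hy₁ hwy₁ (by rw [← hNy₁def]; omega) hw3'
      · by_cases hy3 : ∃ u ∈ Ma, 3 ≤ (nonNbrs G (L₁ \ L₂) u).card
        · obtain ⟨u, huMa, hu3⟩ := hy3
          obtain ⟨huB, hua⟩ := mem_nonNbrs.mp huMa
          exact engine n h1 h2 L₂ L₁ hc2 hc1 homega' huB ha hua hMa1 hu3
        · push_neg at hw3 hy3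
          set W := Ny₁.erase x with hWdef
          set Y := Ma.erase y₂ with hYdef
          have hxN1' : x ∈ Ny₁ := hxN1
          have hWcard : 3 * n ≤ W.card := by
            rw [hWdef, Finset.card_erase_of_mem hxN1']; omega
          have hMa3n : 3 * n + 1 ≤ Ma.card := by omega
          have hYcard : 3 * n ≤ Y.card := by
            rw [hYdef, Finset.card_erase_of_mem hy₂Ma]; omega
          have hWfacts : ∀ w ∈ W, (w ∈ L₁ ∧ w ∉ L₂) ∧ ¬ G.Adj w y₁ ∧ w ≠ x ∧ w ≠ a
              ∧ G.Adj w y₂ := by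
            intro w hwW
            have hwx := Finset.ne_of_mem_erase hwW
            obtain ⟨hwA, hwy₁⟩ := mem_nonNbrs.mp (Finset.mem_of_mem_erase hwW)
            obtain ⟨hwL₁, hwL₂⟩ := Finset.mem_sdiff.mp hwA
            have hwa : w ≠ a := by rintro rfl; exact hwy₁ hay₁
            have hwy₂ : G.Adj w y₂ := by
              by_contra h
              have hmem : w ∈ Ny₂ := mem_nonNbrs.mpr ⟨hwA, h⟩
              rw [hN2eq] at hmem
              rcases Finset.mem_insert.mp hmem with rfl | hmem
              · exact hwx rfl
              · exact hwa (Finset.mem_singleton.mp hmem)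
            exact ⟨⟨hwL₁, hwL₂⟩, hwy₁, hwx, hwa, hwy₂⟩
          have hYfacts : ∀ u ∈ Y, (u ∈ L₂ ∧ u ∉ L₁) ∧ ¬ G.Adj u a ∧ u ≠ y₂ ∧ u ≠ y₁
              ∧ G.Adj u x := by
            intro u huY
            have huy₂ := Finset.ne_of_mem_erase huY
            obtain ⟨huB, hua⟩ := mem_nonNbrs.mp (Finset.mem_of_mem_erase huY)
            obtain ⟨huL₂, huL₁⟩ := Finset.mem_sdiff.mp huB
            have huy₁ : u ≠ y₁ := by rintro rfl; exact hua hay₁.symm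
            have hux : G.Adj u x := by
              by_contra h
              have hmem : u ∈ Mx := mem_nonNbrs.mpr ⟨huB, h⟩
              rw [hMxeq] at hmem
              rcases Finset.mem_insert.mp hmem with rfl | hmem
              · exact huy₁ rfl
              · exact huy₂ (Finset.mem_singleton.mp hmem)
            exact ⟨⟨huL₂, huL₁⟩, hua, huy₂, huy₁, hux⟩
          by_cases hα : ∃ w ∈ W, ∃ u ∈ Y, ¬ G.Adj w u
          · obtain ⟨w, hwW, u, huY, hwu⟩ := hα
            obtain ⟨⟨hwL₁, hwL₂⟩, hwy₁, hwx, hwa, hwy₂⟩ := hWfacts w hwW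
            obtain ⟨⟨huL₂, huL₁⟩, hua, huy₂, huy₁, hux⟩ := hYfacts u huY
            -- pick yp ∈ Y adjacent to w
            have hyp : ∃ yp ∈ Y, G.Adj w yp := by
              by_contra h
              push_neg at h
              have hsub : Y ⊆ nonNbrs G (L₂ \ L₁) w := by
                intro v hv
                exact mem_nonNbrs.mpr ⟨Finset.mem_sdiff.mpr ⟨(hYfacts v hv).1.1,
                  (hYfacts v hv).1.2⟩, fun hadj => h v hv hadj.symm⟩
              have h5 := hw3 w (Finset.mem_of_mem_erase hwW)
              have h6 := Finset.card_le_card hsub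
              omega
            obtain ⟨yp, hypY, hwyp⟩ := hyp
            obtain ⟨⟨hypL₂, hypL₁⟩, hypa, hypy₂, hypy₁, hypx⟩ := hYfacts yp hypY
            have hypu : yp ≠ u := by rintro rfl; exact hwu hwyp
            set K := (W.erase w) \ (nonNbrs G (W.erase w) yp) with hKdef
            have hbadsub : nonNbrs G (W.erase w) yp ⊆ W.erase w := nonNbrs_subset
            have hbadcard : (nonNbrs G (W.erase w) yp).card ≤ 1 := by
              rw [Finset.card_le_one]
              intro p hp q hq
              by_contra hpq
              obtain ⟨hpW, hpyp⟩ := mem_nonNbrs.mp hp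
              obtain ⟨hqW, hqyp⟩ := mem_nonNbrs.mp hq
              obtain ⟨⟨hpL₁, hpL₂⟩, hpy₁, _, _, _⟩ := hWfacts p (Finset.mem_of_mem_erase hpW)
              obtain ⟨⟨hqL₁, hqL₂⟩, hqy₁, _, _, _⟩ := hWfacts q (Finset.mem_of_mem_erase hqW)
              exact no2K2 h1 (clique_adj hc1 hpL₁ hqL₁ hpq)
                (clique_adj hc2 hy₁L₂ hypL₂ (Ne.symm hypy₁)) hpy₁ hpyp hqy₁ hqyp
            have hKcard : n ≤ K.card := by
              have h1' : K.card = (W.erase w).card - (nonNbrs G (W.erase w) yp).card :=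
                Finset.card_sdiff_of_subset hbadsub
              have h2' : (W.erase w).card = W.card - 1 :=
                Finset.card_erase_of_mem hwW
              omega
            refine noP4Kn h2 (v0 := a) (v1 := w) (v2 := yp) (v3 := u)
              (clique_adj hc1 haL₁ hwL₁ (Ne.symm hwa)) hwyp
              (clique_adj hc2 hypL₂ huL₂ hypu)
              (fun h => hypa h.symm) (fun h => hua h.symm) hwu (hK := ?_) hKcard ?_
            · apply hc1.subset
              intro v hv
              have hvW := Finset.mem_of_mem_erase
                ((Finset.mem_sdiff.mp (Finset.mem_coe.mp hv)).1)
              exact Finset.mem_coe.mpr (hWfacts v hvW).1.1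
            · intro k hk
              obtain ⟨hkEW, hkbad⟩ := Finset.mem_sdiff.mp hk
              have hkw := Finset.ne_of_mem_erase hkEW
              have hkW := Finset.mem_of_mem_erase hkEW
              obtain ⟨⟨hkL₁, hkL₂⟩, hky₁, hkx, hka, hky₂⟩ := hWfacts k hkW
              have hkyp : G.Adj k yp := by
                by_contra h
                exact hkbad (mem_nonNbrs.mpr ⟨hkEW, h⟩)
              have hku : G.Adj k u := by
                by_contra h
                exact no2K2 h1 (clique_adj hc1 hkL₁ hwL₁ hkw)
                  (clique_adj hc2 hy₁L₂ huL₂ (Ne.symm huy₁)) hky₁ h hwy₁ hwu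
              exact ⟨clique_adj hc1 hkL₁ haL₁ hka, clique_adj hc1 hkL₁ hwL₁ hkw, hkyp, hku⟩
          · push_neg at hα
            have hYne : Y.Nonempty := Finset.card_pos.mp (by omega)
            obtain ⟨yp, hypY⟩ := hYne
            obtain ⟨⟨hypL₂, hypL₁⟩, hypa, hypy₂, hypy₁, hypx⟩ := hYfacts yp hypY
            refine noP4Kn h2 (v0 := a) (v1 := x) (v2 := yp) (v3 := y₂)
              (clique_adj hc1 haL₁ hxL₁ hax) hypx.symm
              (clique_adj hc2 hypL₂ hy₂L₂ hypy₂)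
              (fun h => hypa h.symm) hay₂ hxy₂ (K := W) (hK := ?_) (by omega) ?_
            · apply hc1.subset
              intro v hv
              exact Finset.mem_coe.mpr (hWfacts v (Finset.mem_coe.mp hv)).1.1
            · intro k hk
              obtain ⟨⟨hkL₁, hkL₂⟩, hky₁, hkx, hka, hky₂⟩ := hWfacts k hk
              exact ⟨clique_adj hc1 hkL₁ haL₁ hka, clique_adj hc1 hkL₁ hxL₁ hkx,
                hα k hk yp hypY, hky₂⟩

end NoTwo

section Final

variable {V : Type} [Fintype V] [DecidableEq V] {G : SimpleGraph V}

lemma noTwo (n : ℕ) (hn : 1 ≤ n)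
    (h1 : G.HFree twoK2) (h2 : G.HFree (P4JoinK n))
    (L₁ L₂ : Finset V) (hc1 : G.IsClique ↑L₁) (hc2 : G.IsClique ↑L₂)
    (hcard : L₁.card = L₂.card)
    (homega : ∀ s : Finset V, s ⊆ L₁ ∪ L₂ → G.IsClique ↑s → s.card ≤ L₁.card)
    (hge : 4 * n + 2 ≤ L₁.card)
    {x y₁ y₂ : V} (hx : x ∈ L₁ \ L₂) (hy₁ : y₁ ∈ L₂ \ L₁) (hy₂ : y₂ ∈ L₂ \ L₁)
    (hne : y₁ ≠ y₂) (hxy₁ : ¬ G.Adj x y₁) (hxy₂ : ¬ G.Adj x y₂) : False := by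
  obtain ⟨hxL₁, hxL₂⟩ := Finset.mem_sdiff.mp hx
  obtain ⟨hy₁L₂, hy₁L₁⟩ := Finset.mem_sdiff.mp hy₁
  obtain ⟨hy₂L₂, hy₂L₁⟩ := Finset.mem_sdiff.mp hy₂
  have hstepA : ∃ aa ∈ L₁ \ L₂, aa ≠ x ∧
      ((G.Adj aa y₁ ∧ ¬ G.Adj aa y₂) ∨ (G.Adj aa y₂ ∧ ¬ G.Adj aa y₁)) := by
    by_contra h
    push_neg at h
    have hall : ∀ aa ∈ L₁ \ L₂, aa ≠ x → G.Adj aa y₁ ∧ G.Adj aa y₂ := by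
      intro aa haa haax
      obtain ⟨h12, h21⟩ := h aa haa haax
      obtain ⟨haaL₁, haaL₂⟩ := Finset.mem_sdiff.mp haa
      by_cases hA1 : G.Adj aa y₁
      · exact ⟨hA1, h12 hA1⟩
      · have hA2 : ¬ G.Adj aa y₂ := fun hA2 => hA1 (h21 hA2)
        exact (no2K2 h1 (clique_adj hc1 haaL₁ hxL₁ haax)
          (clique_adj hc2 hy₁L₂ hy₂L₂ hne) hA1 hA2 hxy₁ hxy₂).elim
    set S := insert y₁ (insert y₂ (L₁.erase x)) with hSdef
    have hSmem : ∀ u ∈ S, u = y₁ ∨ u = y₂ ∨ (u ∈ L₁ ∧ u ≠ x) := by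
      intro u hu
      rw [hSdef, Finset.mem_insert, Finset.mem_insert] at hu
      rcases hu with rfl | rfl | hu
      · exact Or.inl rfl
      · exact Or.inr (Or.inl rfl)
      · exact Or.inr (Or.inr ⟨Finset.mem_of_mem_erase hu, Finset.ne_of_mem_erase hu⟩)
    have hadjy : ∀ i ∈ ({y₁, y₂} : Finset V), ∀ u ∈ L₁, u ≠ x → G.Adj u i := by
      intro i hi u huL₁ hux
      by_cases huL₂ : u ∈ L₂
      · rcases Finset.mem_insert.mp hi with rfl | hi
        · exact clique_adj hc2 huL₂ hy₁L₂ (by rintro rfl; exact hy₁L₁ huL₁)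
        · rw [Finset.mem_singleton.mp hi]
          exact clique_adj hc2 huL₂ hy₂L₂ (by rintro rfl; exact hy₂L₁ huL₁)
      · have := hall u (Finset.mem_sdiff.mpr ⟨huL₁, huL₂⟩) hux
        rcases Finset.mem_insert.mp hi with rfl | hi
        · exact this.1
        · rw [Finset.mem_singleton.mp hi]; exact this.2
    have hSclique : G.IsClique ↑S := by
      intro u hu v hv huv
      have hu' := hSmem u (Finset.mem_coe.mp hu)
      have hv' := hSmem v (Finset.mem_coe.mp hv)
      rcases hu' with rfl | rfl | ⟨huL₁, hux⟩ <;> rcases hv' with rfl | rfl | ⟨hvL₁, hvx⟩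
      · exact absurd rfl huv
      · exact clique_adj hc2 hy₁L₂ hy₂L₂ huv
      · exact (hadjy u (by simp) v hvL₁ hvx).symm
      · exact clique_adj hc2 hy₂L₂ hy₁L₂ huv
      · exact absurd rfl huv
      · exact (hadjy u (by simp) v hvL₁ hvx).symm
      · exact hadjy v (by simp) u huL₁ hux
      · exact hadjy v (by simp) u huL₁ hux
      · exact clique_adj hc1 huL₁ hvL₁ huv
    have hSsub : S ⊆ L₁ ∪ L₂ := by
      intro u hu
      rcases hSmem u hu with rfl | rfl | ⟨huL₁, _⟩
      · exact Finset.mem_union_right _ hy₁L₂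
      · exact Finset.mem_union_right _ hy₂L₂
      · exact Finset.mem_union_left _ huL₁
    have hy₂mem : y₂ ∉ L₁.erase x := fun h => hy₂L₁ (Finset.mem_of_mem_erase h)
    have hy₁mem : y₁ ∉ insert y₂ (L₁.erase x) := by
      rw [Finset.mem_insert]
      rintro (rfl | h)
      · exact hne rfl
      · exact hy₁L₁ (Finset.mem_of_mem_erase h)
    have hScard : S.card = L₁.card + 1 := by
      rw [hSdef, Finset.card_insert_of_notMem hy₁mem,
        Finset.card_insert_of_notMem hy₂mem, Finset.card_erase_of_mem hxL₁]
      have : 1 ≤ L₁.card := Finset.card_pos.mpr ⟨x, hxL₁⟩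
      omega
    have := homega S hSsub hSclique
    omega
  obtain ⟨aa, haa, haax, hcase⟩ := hstepA
  rcases hcase with ⟨h1', h2'⟩ | ⟨h1', h2'⟩
  · exact noTwoA n hn h1 h2 L₁ L₂ hc1 hc2 hcard homega hge hx hy₁ hy₂ hne hxy₁ hxy₂
      haa haax h1' h2'
  · exact noTwoA n hn h1 h2 L₁ L₂ hc1 hc2 hcard homega hge hx hy₂ hy₁ (Ne.symm hne) hxy₂ hxy₁
      haa haax h1' h2'

lemma master (n : ℕ) (hn : 1 ≤ n)
    (h1 : G.HFree twoK2) (h2 : G.HFree (P4JoinK n))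
    (L₁ L₂ : Finset V) (hc1 : G.IsClique ↑L₁) (hc2 : G.IsClique ↑L₂)
    (hcard : L₁.card = L₂.card)
    (homega : ∀ s : Finset V, s ⊆ L₁ ∪ L₂ → G.IsClique ↑s → s.card ≤ L₁.card)
    (hge : 4 * n + 2 ≤ L₁.card) :
    ∀ x ∈ L₁ \ L₂, ∃! y, y ∈ L₂ \ L₁ ∧ ¬ G.Adj x y := by
  intro x hx
  obtain ⟨hxL₁, hxL₂⟩ := Finset.mem_sdiff.mp hx
  have hex : ∃ y ∈ L₂ \ L₁, ¬ G.Adj x y := by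
    by_contra h
    push_neg at h
    have hSclique : G.IsClique ↑(insert x L₂) := by
      intro u hu v hv huv
      rw [Finset.coe_insert, Set.mem_insert_iff] at hu hv
      rcases hu with rfl | hu <;> rcases hv with rfl | hv
      · exact absurd rfl huv
      · have hvL₂ := Finset.mem_coe.mp hv
        by_cases hvL₁ : v ∈ L₁
        · exact clique_adj hc1 hxL₁ hvL₁ huv
        · exact h v (Finset.mem_sdiff.mpr ⟨hvL₂, hvL₁⟩)
      · have huL₂ := Finset.mem_coe.mp hu
        by_cases huL₁ : u ∈ L₁
        · exact (clique_adj hc1 hxL₁ huL₁ (Ne.symm huv)).symm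
        · exact (h u (Finset.mem_sdiff.mpr ⟨huL₂, huL₁⟩)).symm
      · exact clique_adj hc2 (Finset.mem_coe.mp hu) (Finset.mem_coe.mp hv) huv
    have hSsub : insert x L₂ ⊆ L₁ ∪ L₂ := by
      intro u hu
      rcases Finset.mem_insert.mp hu with rfl | hu
      · exact Finset.mem_union_left _ hxL₁
      · exact Finset.mem_union_right _ hu
    have := homega _ hSsub hSclique
    rw [Finset.card_insert_of_notMem hxL₂] at this
    omega
  obtain ⟨y₀, hy₀, hxy₀⟩ := hex
  refine ⟨y₀, ⟨hy₀, hxy₀⟩, ?_⟩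
  rintro y ⟨hy, hxy⟩
  by_contra hney
  exact noTwo n hn h1 h2 L₁ L₂ hc1 hc2 hcard homega hge hx hy hy₀ hney hxy hxy₀

end Final

/-- In a `(2K₂, P₄ ∨ Kₙ)`-free graph, if `L₁, L₂` are (not necessarily disjoint) cliques
with `|L₁| = |L₂| = ω(G[L₁ ∪ L₂]) ≥ 4n + 2`, then every vertex of `L₁ \ L₂` has exactly
one nonneighbour in `L₂ \ L₁`, and vice versa. -/
theorem stmt19 (n : ℕ) (hn : 1 ≤ n) {V : Type} [Fintype V] [DecidableEq V] (G : SimpleGraph V)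
    (h1 : G.HFree twoK2) (h2 : G.HFree (P4JoinK n))
    (L₁ L₂ : Finset V)
    (hc1 : G.IsClique ↑L₁) (hc2 : G.IsClique ↑L₂)
    (hcard : L₁.card = L₂.card)
    (homega : ∀ s : Finset V, s ⊆ L₁ ∪ L₂ → G.IsClique ↑s → s.card ≤ L₁.card)
    (hge : 4 * n + 2 ≤ L₁.card) :
    (∀ x ∈ L₁ \ L₂, ∃! y, y ∈ L₂ \ L₁ ∧ ¬ G.Adj x y) ∧
    (∀ y ∈ L₂ \ L₁, ∃! x, x ∈ L₁ \ L₂ ∧ ¬ G.Adj y x) := by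
  have homega' : ∀ s : Finset V, s ⊆ L₂ ∪ L₁ → G.IsClique ↑s → s.card ≤ L₂.card := by
    intro s hs hcl
    rw [← hcard]
    exact homega s (by rwa [Finset.union_comm]) hcl
  constructor
  · exact master n hn h1 h2 L₁ L₂ hc1 hc2 hcard homega hge
  · exact master n hn h1 h2 L₂ L₁ hc2 hc1 hcard.symm homega' (hcard ▸ hge)
end
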